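/- Let E be a complex Hilbert space and f : ℂ → E an entire analytic function such that the subharmonic function z ↦ ‖f(z)‖²_E admits a harmonic majorant on ℂ. Then f is constant. -/

import Mathlib

/-!
The real part of the majorant `F` dominates `‖f‖² ≥ 0`, so `F` maps `ℂ` into a half-plane;
then `1 / (F + 1)` is a bounded entire function, and Liouville's theorem makes `F`, hence
`Re F`, constant. Consequently `‖f‖²` is bounded and Liouville's theorem applies to `f`.
-/

open Bornology Set

theorem Differentiable.apply_eq_apply_of_forall_le_re {F : ℂ → ℂ} (hF : Differentiable ℂ F)
    {c : ℝ} (hc : ∀ z, c ≤ (F z).re) (z w : ℂ) : F z = F w := by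
  set G : ℂ → ℂ := fun z ↦ F z - (c - 1)
  have hG_norm : ∀ z, 1 ≤ ‖G z‖ := fun z ↦ calc
    1 ≤ (G z).re := by
      simp only [G, Complex.sub_re, Complex.ofReal_re, Complex.one_re]
      linarith [hc z]
    _ ≤ ‖G z‖ := Complex.re_le_norm _
  have hG_ne : ∀ z, G z ≠ 0 := fun z ↦ norm_pos_iff.1 (one_pos.trans_le (hG_norm z))
  have hG_inv_bdd : IsBounded (range fun z ↦ (G z)⁻¹) := by
    refine isBounded_iff_forall_norm_le.2 ⟨1, ?_⟩
    rintro _ ⟨z, rfl⟩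
    rw [norm_inv]
    exact inv_le_one_of_one_le₀ (hG_norm z)
  have hG_inv : Differentiable ℂ fun z ↦ (G z)⁻¹ :=
    (hF.sub_const _).inv hG_ne
  simpa [G] using hG_inv.apply_eq_apply_of_bounded hG_inv_bdd z w

theorem entire_with_harmonic_majorant_is_constant_general
    (E : Type*) [NormedAddCommGroup E] [InnerProductSpace ℂ E]
    (f : ℂ → E) (hf : Differentiable ℂ f)
    (hmaj : ∃ F : ℂ → ℂ, Differentiable ℂ F ∧ ∀ z : ℂ, ‖f z‖ ^ 2 ≤ (F z).re) :
    ∀ z w : ℂ, f z = f w := by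
  obtain ⟨F, hF, hle⟩ := hmaj
  have hF_const : ∀ z, F z = F 0 := fun z ↦
    hF.apply_eq_apply_of_forall_le_re (c := 0) (fun z ↦ (sq_nonneg _).trans (hle z)) z 0
  have hf_bdd : IsBounded (range f) := by
    refine isBounded_iff_forall_norm_le.2 ⟨√(F 0).re, ?_⟩
    rintro _ ⟨z, rfl⟩
    exact Real.le_sqrt_of_sq_le (hF_const z ▸ hle z)
  exact hf.apply_eq_apply_of_bounded hf_bdd

/-- If `f : ℂ → E` is entire (`E` a complex Hilbert space)
and the subharmonic function `z ↦ ‖f z‖²` admits a harmonic majorant on all of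
`ℂ` (harmonic functions on the plane being exactly the real parts of entire
functions), then `f` is constant. -/
theorem entire_with_harmonic_majorant_is_constant
    (E : Type*) [NormedAddCommGroup E] [InnerProductSpace ℂ E] [CompleteSpace E]
    (f : ℂ → E) (hf : Differentiable ℂ f)
    (hmaj : ∃ F : ℂ → ℂ, Differentiable ℂ F ∧ ∀ z : ℂ, ‖f z‖ ^ 2 ≤ (F z).re) :
    ∀ z w : ℂ, f z = f w :=
  entire_with_harmonic_majorant_is_constant_general E f hf hmaj
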